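/- Let f ∈ ℝ[x,y,z] be homogeneous of degree 4 defining a smooth complex plane quartic Q = V(f), and let L = V(ℓ) be a split real bitangent of Q with distinct real tangency points p₁ ≠ p₂, with real homogeneous representatives p̂₁, p̂₂ ∈ ℝ³ ∖ {0}. Let L∞ = V(ℓ∞) and M = V(ℓ_M) be real lines satisfying ℓ∞(p̂ᵢ) ≠ 0 and ℓ_M(p̂ᵢ) ≠ 0 for i = 1, 2. Then Qtype_{L∞}(L) · Qtype_M(L) = sign( ℓ∞(p̂₁) · ℓ∞(p̂₂) · ℓ_M(p̂₁) · ℓ_M(p̂₂) ). Equivalently, Qtype_{L∞}(L) = Qtype_M(L) if and only if the line L∞ does not separate p₁ from p₂ in the affine plane ℙ²(ℝ) ∖ M, i.e. if and only if L∞ does not meet the grate of L with respect to M (the closed segment joining p₁ and p₂ in ℙ²(ℝ) ∖ M). -/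

import Mathlib

open MvPolynomial

noncomputable section

/-- Complexification of a real ternary polynomial. -/
def cmap (f : MvPolynomial (Fin 3) ℝ) : MvPolynomial (Fin 3) ℂ :=
  MvPolynomial.map (algebraMap ℝ ℂ) f

/-- Evaluation of the complexification of `f` at a complex point. -/
def cev (f : MvPolynomial (Fin 3) ℝ) (p : Fin 3 → ℂ) : ℂ :=
  eval p (cmap f)

/-- The linear form with coefficient vector `ℓ`, evaluated at `p`. -/
def lin {R : Type*} [CommSemiring R] (ℓ p : Fin 3 → R) : R := ∑ i, ℓ i * p i

/-- The complexification of a real vector. -/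
def cvec (v : Fin 3 → ℝ) : Fin 3 → ℂ := fun i => (v i : ℂ)

/-- Smoothness of the complex plane curve V(f): the gradient is nonzero at every
nonzero complex zero of `f`. -/
def SmoothQuartic (f : MvPolynomial (Fin 3) ℝ) : Prop :=
  ∀ p : Fin 3 → ℂ, p ≠ 0 → cev f p = 0 → ∃ i, eval p (pderiv i (cmap f)) ≠ 0

/-- The line `V(ℓ)` is a bitangent of `V(f)` with tangency points `z₁, z₂`:
the restriction of `f` to the line is a nonzero scalar multiple of the square of a
nonzero quadratic form on the line, whose zeros (with multiplicity) are `z₁, z₂`.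
Over ℂ the quadratic form is written as the product of two linear forms `m₁, m₂`,
each nonzero on the line and vanishing at the corresponding tangency point. -/
def IsBitangentAt (f : MvPolynomial (Fin 3) ℝ) (ℓ z₁ z₂ : Fin 3 → ℂ) : Prop :=
  ℓ ≠ 0 ∧ z₁ ≠ 0 ∧ z₂ ≠ 0 ∧ lin ℓ z₁ = 0 ∧ lin ℓ z₂ = 0 ∧
  ∃ (m₁ m₂ : Fin 3 → ℂ) (c : ℂ), c ≠ 0 ∧
    lin m₁ z₁ = 0 ∧ lin m₂ z₂ = 0 ∧
    (∃ p, lin ℓ p = 0 ∧ lin m₁ p ≠ 0) ∧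
    (∃ p, lin ℓ p = 0 ∧ lin m₂ p ≠ 0) ∧
    (∀ p, lin ℓ p = 0 → cev f p = c * (lin m₁ p * lin m₂ p) ^ 2)

/-- The line `V(ℓ)` is a bitangent of the quartic `V(f)`. -/
def IsBitangent (f : MvPolynomial (Fin 3) ℝ) (ℓ : Fin 3 → ℂ) : Prop :=
  ∃ z₁ z₂, IsBitangentAt f ℓ z₁ z₂

/-- The set of real bitangent lines of `V(f)`, as points of the real projective
plane of lines. -/
def realBitangents (f : MvPolynomial (Fin 3) ℝ) :
    Set (Projectivization ℝ (Fin 3 → ℝ)) :=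
  {L | IsBitangent f (cvec L.rep)}

/-- Directional derivative of (the complexification of) `f` along the real vector `v`. -/
def Dv (f : MvPolynomial (Fin 3) ℝ) (v : Fin 3 → ℝ) (z : Fin 3 → ℂ) : ℂ :=
  ∑ i, (v i : ℂ) * eval z (pderiv i (cmap f))

/-- `Qtype_{L∞}(L) = ε ∈ {+1, -1}` for the real bitangent `L = V(ℓ)` of `V(f)`,
relative to the real line at infinity `V(ℓinf)`: for tangency points normalized so
that `ℓ∞(z̃ᵢ) = 1` and any real `v` with `ℓ(v) ≠ 0`, the product
`(D_v f)(z̃₁)·(D_v f)(z̃₂)` is a nonzero real number of sign `ε`. -/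
def HasQtype (f : MvPolynomial (Fin 3) ℝ) (ℓinf : Fin 3 → ℝ) (ℓ : Fin 3 → ℂ)
    (ε : ℤ) : Prop :=
  ∃ (z₁ z₂ : Fin 3 → ℂ) (v : Fin 3 → ℝ) (r : ℝ),
    IsBitangentAt f ℓ z₁ z₂ ∧
    lin (cvec ℓinf) z₁ = 1 ∧ lin (cvec ℓinf) z₂ = 1 ∧
    lin ℓ (cvec v) ≠ 0 ∧
    Dv f v z₁ * Dv f v z₂ = (r : ℂ) ∧
    ((0 < r ∧ ε = 1) ∨ (r < 0 ∧ ε = -1))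

/-- A point of ℙ²(ℂ) (given by a nonzero vector) is real. -/
def IsRealPoint (z : Fin 3 → ℂ) : Prop :=
  ∃ (w : Fin 3 → ℝ) (t : ℂ), w ≠ 0 ∧ t ≠ 0 ∧ z = t • cvec w

/-!
At a tangency point `z` of the bitangent `L = V(ℓ)`, the restriction of `f` to `L` vanishes to
second order, so `∇f(z)` annihilates `L` and hence equals `μ • ℓ`, with `μ ≠ 0` by smoothness;
at a real tangency point `p` this reads `∇f(p) = r • ℓ` with `r` real. Since the partials of `f`
are cubic, `D_v f (t • p) = t³ r ℓ(v)`, and the normalization `ℓ∞(z̃) = 1` forces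
`z̃ = p / ℓ∞(p)`. Hence `(D_v f)(z̃₁) (D_v f)(z̃₂) = r₁ r₂ ℓ(v)² / (ℓ∞(p₁) ℓ∞(p₂))³`, so
`Qtype_{L∞}(L) = sign (r₁ r₂ ℓ∞(p₁) ℓ∞(p₂))`. The factor `sign (r₁ r₂)` does not depend on the
line at infinity, so it cancels in the product of the Qtypes relative to `L∞` and `M`.
-/

section LinearAlgebra

open Matrix

variable {F : Type*} [Field F]

theorem exists_eq_smul_of_cross_eq_zero {u v : Fin 3 → F} (hu : u ≠ 0) (h : u ⨯₃ v = 0) :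
    ∃ t : F, v = t • u := by
  have hdep : ¬LinearIndependent F ![u, v] :=
    fun hli => crossProduct_ne_zero_iff_linearIndependent.mpr hli h
  rw [LinearIndependent.pair_iff] at hdep
  push Not at hdep
  obtain ⟨s, t, hst, hne⟩ := hdep
  by_cases ht : t = 0
  · subst ht
    rw [zero_smul, add_zero, smul_eq_zero] at hst
    exact absurd (hst.resolve_right hu) fun hs => hne hs rfl
  · refine ⟨-s / t, funext fun i => ?_⟩
    have hi := congrFun hst i
    simp only [Pi.add_apply, Pi.smul_apply, smul_eq_mul, Pi.zero_apply] at hi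
    simp only [Pi.smul_apply, smul_eq_mul]
    field_simp
    linear_combination hi

theorem exists_eq_smul_of_forall_dotProduct_eq_zero {ℓ g : Fin 3 → F} (hℓ : ℓ ≠ 0)
    (h : ∀ w, ℓ ⬝ᵥ w = 0 → g ⬝ᵥ w = 0) : ∃ t : F, g = t • ℓ := by
  refine exists_eq_smul_of_cross_eq_zero hℓ (funext fun i => ?_)
  have hi := h (Pi.single i 1 ⨯₃ ℓ) (dot_cross_self _ _)
  rwa [triple_product_permutation, single_dotProduct, one_mul] at hi

theorem exists_eq_smul_of_dotProduct_eq_zero {ℓ m z p q : Fin 3 → F} (hℓ : ℓ ≠ 0) (hz : z ≠ 0)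
    (hℓz : ℓ ⬝ᵥ z = 0) (hmz : m ⬝ᵥ z = 0) (hℓp : ℓ ⬝ᵥ p = 0) (hmp : m ⬝ᵥ p = 0)
    (hℓq : ℓ ⬝ᵥ q = 0) (hmq : m ⬝ᵥ q ≠ 0) : ∃ t : F, p = t • z := by
  -- otherwise both `ℓ` and `m` are multiples of `z ⨯₃ p`, so `m` vanishes where `ℓ` does
  by_contra hzp
  have hw : z ⨯₃ p ≠ 0 := fun h => hzp (exists_eq_smul_of_cross_eq_zero hz h)
  have orth : ∀ k : Fin 3 → F, k ⬝ᵥ z = 0 → k ⬝ᵥ p = 0 → ∃ a : F, k = a • z ⨯₃ p := by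
    intro k hkz hkp
    refine exists_eq_smul_of_cross_eq_zero hw ?_
    rw [cross_cross_eq_smul_sub_smul, dotProduct_comm z, dotProduct_comm p, hkz, hkp,
      zero_smul, zero_smul, sub_zero]
  obtain ⟨a, rfl⟩ := orth ℓ hℓz hℓp
  obtain ⟨b, rfl⟩ := orth m hmz hmp
  have ha : a ≠ 0 := by rintro rfl; exact hℓ (zero_smul _ _)
  rw [smul_dotProduct, smul_eq_mul, mul_eq_zero, or_iff_right ha] at hℓq
  exact hmq (by rw [smul_dotProduct, hℓq, smul_zero])

end LinearAlgebra

namespace MvPolynomial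

open scoped Polynomial

variable {σ R : Type*} [CommSemiring R]

def grad (g : MvPolynomial σ R) (z : σ → R) (i : σ) : R := eval z (pderiv i g)

theorem IsHomogeneous.eval_smul [Fintype σ] {φ : MvPolynomial σ R} {n : ℕ}
    (h : φ.IsHomogeneous n) (t : R) (z : σ → R) : eval (t • z) φ = t ^ n * eval z φ := by
  rw [eval_eq', eval_eq', Finset.mul_sum]
  refine Finset.sum_congr rfl fun d hd => ?_
  have hdeg : ∑ i, d i = n := by
    rw [← Finsupp.degree_eq_sum, Finsupp.degree_eq_weight_one]
    exact h (mem_support_iff.mp hd)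
  simp only [Pi.smul_apply, smul_eq_mul, mul_pow, Finset.prod_mul_distrib,
    Finset.prod_pow_eq_pow_sum, hdeg]
  ring

theorem IsHomogeneous.grad_smul [Fintype σ] {φ : MvPolynomial σ R} {n : ℕ}
    (h : φ.IsHomogeneous (n + 1)) (t : R) (z : σ → R) : grad φ (t • z) = t ^ n • grad φ z :=
  _root_.funext fun i => by simpa [grad] using (h.pderiv (i := i)).eval_smul t z

def restrictLine (z w : σ → R) : MvPolynomial σ R →ₐ[R] R[X] :=
  aeval fun i => Polynomial.C (z i) + Polynomial.C (w i) * Polynomial.X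

theorem eval_restrictLine (z w : σ → R) (g : MvPolynomial σ R) (t : R) :
    (restrictLine z w g).eval t = eval (z + t • w) g := by
  induction g using MvPolynomial.induction_on with
  | C a => simp [restrictLine]
  | add p q hp hq => simp [hp, hq]
  | mul_X p j hp => simp [restrictLine] at hp ⊢; simp [hp]; ring

theorem coeff_restrictLine_one [Fintype σ] (z w : σ → R) (g : MvPolynomial σ R) :
    (restrictLine z w g).coeff 1 = w ⬝ᵥ grad g z := by
  classical
  induction g using MvPolynomial.induction_on with
  | C a => simp [restrictLine, grad, dotProduct]
  | add p q hp hq => simp [hp, hq, grad, dotProduct, mul_add, Finset.sum_add_distrib]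
  | mul_X p j hp =>
    have h0 : (restrictLine z w p).coeff 0 = eval z p := by
      rw [Polynomial.coeff_zero_eq_eval_zero, eval_restrictLine, zero_smul, add_zero]
    simp only [map_mul, restrictLine, aeval_X, mul_add, Polynomial.coeff_add,
      Polynomial.coeff_mul_C, ← mul_assoc, Polynomial.coeff_mul_X] at hp h0 ⊢
    simp [hp, h0, grad, dotProduct, pderiv_X, Pi.single_apply, Finset.sum_add_distrib, mul_add,
      apply_ite]
    rw [add_comm, Finset.sum_mul]
    congr 1
    · ring
    · exact Finset.sum_congr rfl fun _ _ => by ring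

theorem dotProduct_grad_eq_zero_of_eval_add_smul {R : Type*} [CommRing R] [IsDomain R]
    [Infinite R] [Fintype σ] {g : MvPolynomial σ R} {z w : σ → R} {Q : R[X]}
    (h : ∀ t, eval (z + t • w) g = t ^ 2 * Q.eval t) : w ⬝ᵥ grad g z = 0 := by
  have hline : restrictLine z w g = Polynomial.X ^ 2 * Q :=
    Polynomial.funext fun t => by simp [eval_restrictLine, h]
  rw [← coeff_restrictLine_one, hline, Polynomial.coeff_X_pow_mul']
  simp

end MvPolynomial

lemma cvec_dotProduct_cvec (a b : Fin 3 → ℝ) : cvec a ⬝ᵥ cvec b = ((a ⬝ᵥ b : ℝ) : ℂ) := by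
  simp [cvec, dotProduct]

lemma lin_cvec_cvec (a b : Fin 3 → ℝ) : lin (cvec a) (cvec b) = ((lin a b : ℝ) : ℂ) :=
  cvec_dotProduct_cvec a b

lemma eq_re_smul_of_cvec_eq_smul {p q : Fin 3 → ℝ} {u : ℂ} (h : cvec q = u • cvec p) :
    q = u.re • p :=
  funext fun i => by simpa [cvec] using congrArg Complex.re (congrFun h i)

lemma grad_cmap_cvec (g : MvPolynomial (Fin 3) ℝ) (p : Fin 3 → ℝ) :
    grad (cmap g) (cvec p) = cvec (grad g p) := by
  funext i
  rw [grad, cmap, pderiv_map, eval_map]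
  exact (hom_eval₂ _ (RingHom.id ℝ) (algebraMap ℝ ℂ) p).symm

lemma lin_smul {R : Type*} [CommSemiring R] (a b : Fin 3 → R) (t : R) :
    lin a (t • b) = t * lin a b :=
  dotProduct_smul t a b

lemma lin_add {R : Type*} [CommSemiring R] (a b c : Fin 3 → R) :
    lin a (b + c) = lin a b + lin a c :=
  dotProduct_add a b c

namespace IsBitangentAt

variable {f : MvPolynomial (Fin 3) ℝ} {ℓ z₁ z₂ : Fin 3 → ℂ}

lemma symm (h : IsBitangentAt f ℓ z₁ z₂) : IsBitangentAt f ℓ z₂ z₁ := by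
  obtain ⟨hℓ, h₁, h₂, hℓ₁, hℓ₂, m₁, m₂, c, hc, hm₁, hm₂, hq₁, hq₂, hf⟩ := h
  exact ⟨hℓ, h₂, h₁, hℓ₂, hℓ₁, m₂, m₁, c, hc, hm₂, hm₁, hq₂, hq₁,
    fun p hp => by rw [hf p hp, mul_comm (lin m₁ p)]⟩

lemma smul (h : IsBitangentAt f ℓ z₁ z₂) {s₁ s₂ : ℂ} (hs₁ : s₁ ≠ 0) (hs₂ : s₂ ≠ 0) :
    IsBitangentAt f ℓ (s₁ • z₁) (s₂ • z₂) := by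
  obtain ⟨hℓ, h₁, h₂, hℓ₁, hℓ₂, m₁, m₂, c, hc, hm₁, hm₂, hq₁, hq₂, hf⟩ := h
  refine ⟨hℓ, smul_ne_zero hs₁ h₁, smul_ne_zero hs₂ h₂, ?_, ?_, m₁, m₂, c, hc, ?_, ?_, hq₁, hq₂,
    hf⟩ <;> simp only [lin_smul, mul_eq_zero, *, or_true]

lemma lin_left (h : IsBitangentAt f ℓ z₁ z₂) : lin ℓ z₁ = 0 := h.2.2.2.1

lemma cev_left (h : IsBitangentAt f ℓ z₁ z₂) : cev f z₁ = 0 := by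
  obtain ⟨-, -, -, hℓ₁, -, m₁, m₂, c, -, hm₁, -, -, -, hf⟩ := h
  rw [hf z₁ hℓ₁, hm₁, zero_mul, zero_pow two_ne_zero, mul_zero]

lemma eq_smul_of_cev_eq_zero (h : IsBitangentAt f ℓ z₁ z₂) {p : Fin 3 → ℂ} (hp : lin ℓ p = 0)
    (hfp : cev f p = 0) : (∃ t : ℂ, p = t • z₁) ∨ ∃ t : ℂ, p = t • z₂ := by
  obtain ⟨hℓ, h₁, h₂, hℓ₁, hℓ₂, m₁, m₂, c, hc, hm₁, hm₂, ⟨q₁, hℓq₁, hmq₁⟩, ⟨q₂, hℓq₂, hmq₂⟩,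
    hf⟩ := h
  have hm : lin m₁ p = 0 ∨ lin m₂ p = 0 := by simpa [hc, hfp] using (hf p hp).symm
  exact hm.imp (exists_eq_smul_of_dotProduct_eq_zero hℓ h₁ hℓ₁ hm₁ hp · hℓq₁ hmq₁)
    (exists_eq_smul_of_dotProduct_eq_zero hℓ h₂ hℓ₂ hm₂ hp · hℓq₂ hmq₂)

lemma eq_smul_of_isBitangentAt {a₁ a₂ : Fin 3 → ℂ} (ha : IsBitangentAt f ℓ a₁ a₂)
    (hdist : ¬∃ t : ℂ, a₂ = t • a₁) (hz : IsBitangentAt f ℓ z₁ z₂) :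
    ((∃ s : ℂ, z₁ = s • a₁) ∧ ∃ s : ℂ, z₂ = s • a₂) ∨
      ((∃ s : ℂ, z₁ = s • a₂) ∧ ∃ s : ℂ, z₂ = s • a₁) := by
  have trans {x y w : Fin 3 → ℂ} : (∃ s : ℂ, x = s • y) → (∃ s : ℂ, y = s • w) →
      ∃ s : ℂ, x = s • w :=
    fun ⟨s, hs⟩ ⟨s', hs'⟩ => ⟨s * s', by rw [hs, hs', smul_smul]⟩
  have hdist' : ¬∃ s : ℂ, a₁ = s • a₂ := by
    rintro ⟨s, hs⟩
    have hs0 : s ≠ 0 := by rintro rfl; exact ha.2.1 (by simpa using hs)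
    exact hdist ⟨s⁻¹, by rw [hs, smul_smul, inv_mul_cancel₀ hs0, one_smul]⟩
  have ha₁ := hz.eq_smul_of_cev_eq_zero ha.lin_left ha.cev_left
  have ha₂ := hz.eq_smul_of_cev_eq_zero ha.symm.lin_left ha.symm.cev_left
  rcases ha.eq_smul_of_cev_eq_zero hz.lin_left hz.cev_left with h₁ | h₁ <;>
    rcases ha.eq_smul_of_cev_eq_zero hz.symm.lin_left hz.symm.cev_left with h₂ | h₂
  · exact absurd (ha₂.elim (trans · h₁) (trans · h₂)) hdist
  · exact Or.inl ⟨h₁, h₂⟩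
  · exact Or.inr ⟨h₁, h₂⟩
  · exact absurd (ha₁.elim (trans · h₁) (trans · h₂)) hdist'

lemma dotProduct_grad_eq_zero (h : IsBitangentAt f ℓ z₁ z₂) {w : Fin 3 → ℂ} (hw : lin ℓ w = 0) :
    w ⬝ᵥ grad (cmap f) z₁ = 0 := by
  obtain ⟨-, -, -, hℓ₁, -, m₁, m₂, c, -, hm₁, -, -, -, hf⟩ := h
  -- on `L`, `f (z₁ + t • w) = c (t · m₁ w)² (m₂ (z₁ + t • w))²`
  refine dotProduct_grad_eq_zero_of_eval_add_smul (Q := Polynomial.C (c * lin m₁ w ^ 2) *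
    (Polynomial.C (lin m₂ z₁) + Polynomial.C (lin m₂ w) * Polynomial.X) ^ 2) fun t => ?_
  have hft := hf (z₁ + t • w) (by rw [lin_add, lin_smul, hℓ₁, hw, mul_zero, add_zero])
  rw [cev] at hft
  rw [hft]
  simp only [lin_add, lin_smul, hm₁, Polynomial.eval_mul, Polynomial.eval_pow, Polynomial.eval_add,
    Polynomial.eval_C, Polynomial.eval_X]
  ring

lemma exists_grad_eq_smul (h : IsBitangentAt f ℓ z₁ z₂) (hsm : SmoothQuartic f) :
    ∃ μ : ℂ, μ ≠ 0 ∧ grad (cmap f) z₁ = μ • ℓ := by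
  obtain ⟨μ, hμ⟩ := exists_eq_smul_of_forall_dotProduct_eq_zero h.1 fun w hw => by
    rw [dotProduct_comm]
    exact h.dotProduct_grad_eq_zero hw
  refine ⟨μ, ?_, hμ⟩
  rintro rfl
  obtain ⟨i, hi⟩ := hsm z₁ h.2.1 h.cev_left
  exact hi (by simpa [grad] using congrFun hμ i)

lemma exists_real_grad_eq_smul {ℓ p : Fin 3 → ℝ} (h : IsBitangentAt f (cvec ℓ) (cvec p) z₂)
    (hsm : SmoothQuartic f) : ∃ r : ℝ, r ≠ 0 ∧ grad f p = r • ℓ := by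
  obtain ⟨μ, hμ, hgrad⟩ := h.exists_grad_eq_smul hsm
  rw [grad_cmap_cvec] at hgrad
  refine ⟨μ.re, fun hre => ?_, eq_re_smul_of_cvec_eq_smul hgrad⟩
  have hzero : μ • cvec ℓ = 0 := by
    rw [← hgrad, eq_re_smul_of_cvec_eq_smul hgrad, hre, zero_smul]
    exact funext fun i => Complex.ofReal_zero
  exact (smul_eq_zero.mp hzero).elim hμ h.1

end IsBitangentAt

lemma Dv_smul_cvec {f : MvPolynomial (Fin 3) ℝ} (hf : f.IsHomogeneous 4) {ℓ p : Fin 3 → ℝ} {r : ℝ}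
    (hg : grad f p = r • ℓ) (t : ℂ) (v : Fin 3 → ℝ) :
    Dv f v (t • cvec p) = t ^ 3 * ((r * lin ℓ v : ℝ) : ℂ) := by
  have hcf : (cmap f).IsHomogeneous (3 + 1) := hf.map _
  change cvec v ⬝ᵥ grad (cmap f) (t • cvec p) = _
  rw [hcf.grad_smul, grad_cmap_cvec, hg, dotProduct_smul,
    cvec_dotProduct_cvec, dotProduct_smul, dotProduct_comm, smul_eq_mul, smul_eq_mul]
  rfl

lemma sign_condition_iff {r x y : ℝ} (hr : r = x * y ^ 2) (hy : y ≠ 0) (ε : ℤ) :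
    ((0 < r ∧ ε = 1) ∨ (r < 0 ∧ ε = -1)) ↔ x ≠ 0 ∧ ε = SignType.sign x := by
  have hy2 : 0 < y ^ 2 := by positivity
  subst hr
  rcases lt_trichotomy x 0 with hx | rfl | hx
  · simp [hx, hx.ne, mul_neg_of_neg_of_pos hx hy2, (mul_neg_of_neg_of_pos hx hy2).not_gt]
  · simp
  · simp [hx, hx.ne', mul_pos hx hy2, (mul_pos hx hy2).not_gt]

theorem hasQtype_iff {f : MvPolynomial (Fin 3) ℝ} (hf : f.IsHomogeneous 4) {ℓ n p₁ p₂ : Fin 3 → ℝ}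
    (hbt : IsBitangentAt f (cvec ℓ) (cvec p₁) (cvec p₂)) (hdist : ¬∃ t : ℝ, p₂ = t • p₁)
    {r₁ r₂ : ℝ} (hr₁ : r₁ ≠ 0) (hr₂ : r₂ ≠ 0) (hg₁ : grad f p₁ = r₁ • ℓ)
    (hg₂ : grad f p₂ = r₂ • ℓ) (hn₁ : lin n p₁ ≠ 0) (hn₂ : lin n p₂ ≠ 0) (ε : ℤ) :
    HasQtype f n (cvec ℓ) ε ↔ ε = SignType.sign (r₁ * r₂ * (lin n p₁ * lin n p₂)) := by
  set x := r₁ * r₂ * (lin n p₁ * lin n p₂)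
  set N : (Fin 3 → ℝ) → Fin 3 → ℂ := fun p => ((lin n p : ℝ) : ℂ)⁻¹ • cvec p
  have hprod (v : Fin 3 → ℝ) : Dv f v (N p₁) * Dv f v (N p₂) =
      ((x * (lin ℓ v / (lin n p₁ * lin n p₂) ^ 2) ^ 2 : ℝ) : ℂ) := by
    simp only [N, Dv_smul_cvec hf hg₁, Dv_smul_cvec hf hg₂, x]
    push_cast
    field_simp
  have hnormal {z : Fin 3 → ℂ} {p : Fin 3 → ℝ} (hz : ∃ s : ℂ, z = s • cvec p)
      (h1 : lin (cvec n) z = 1) : z = N p := by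
    obtain ⟨s, rfl⟩ := hz
    rw [lin_smul, lin_cvec_cvec] at h1
    rw [eq_inv_of_mul_eq_one_left h1]
  have hdistC : ¬∃ t : ℂ, cvec p₂ = t • cvec p₁ :=
    fun ⟨t, ht⟩ => hdist ⟨t.re, eq_re_smul_of_cvec_eq_smul ht⟩
  have hx : x ≠ 0 := by positivity
  constructor
  · rintro ⟨z₁, z₂, v, r, hz, hnz₁, hnz₂, hv, hr, hsign⟩
    rw [lin_cvec_cvec, Complex.ofReal_ne_zero] at hv
    have hrx : r = x * (lin ℓ v / (lin n p₁ * lin n p₂) ^ 2) ^ 2 := by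
      refine Complex.ofReal_injective (hr.symm.trans ?_)
      rcases hbt.eq_smul_of_isBitangentAt hdistC hz with ⟨h₁, h₂⟩ | ⟨h₁, h₂⟩
      · rw [hnormal h₁ hnz₁, hnormal h₂ hnz₂, hprod]
      · rw [hnormal h₁ hnz₁, hnormal h₂ hnz₂, mul_comm, hprod]
    exact ((sign_condition_iff hrx (by positivity) ε).mp hsign).2
  · rintro rfl
    have hℓ : ℓ ≠ 0 := by rintro rfl; exact hbt.1 (funext fun i => Complex.ofReal_zero)
    have hℓℓ : lin ℓ ℓ ≠ 0 := fun h => hℓ (dotProduct_self_eq_zero.mp h)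
    refine ⟨N p₁, N p₂, ℓ, _, hbt.smul (by simpa) (by simpa), ?_, ?_, ?_, hprod ℓ,
      (sign_condition_iff rfl (by positivity) _).mpr ⟨hx, rfl⟩⟩
    · rw [lin_smul, lin_cvec_cvec, inv_mul_cancel₀ (by exact_mod_cast hn₁)]
    · rw [lin_smul, lin_cvec_cvec, inv_mul_cancel₀ (by exact_mod_cast hn₂)]
    · rwa [lin_cvec_cvec, Complex.ofReal_ne_zero]

lemma Real.sign_eq_coe_sign (x : ℝ) : Real.sign x = ((SignType.sign x : ℤ) : ℝ) := by
  rcases lt_trichotomy x 0 with hx | rfl | hx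
  · simp [Real.sign_of_neg hx, hx]
  · simp [Real.sign_zero]
  · simp [Real.sign_of_pos hx, hx]

lemma sign_mul_sign_mul {S A B : ℝ} (hS : S ≠ 0) (hA : A ≠ 0) :
    ((((SignType.sign (S * A) : ℤ) * (SignType.sign (S * B) : ℤ) : ℤ) : ℝ) = Real.sign (A * B) ∧
      ((SignType.sign (S * A) : ℤ) = SignType.sign (S * B) ↔ 0 < A * B)) := by
  have key : SignType.sign (S * A) * SignType.sign (S * B) = SignType.sign (A * B) := by
    rw [← sign_mul, show S * A * (S * B) = S ^ 2 * (A * B) by ring, sign_mul,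
      sign_pos (by positivity), one_mul]
  have hne : ∀ a b : SignType, a ≠ 0 → ((a : ℤ) = b ↔ a * b = 1) := by decide
  constructor
  · rw [Real.sign_eq_coe_sign, ← key, SignType.coe_mul]
  · rw [← sign_eq_one_iff, ← key, hne _ _ (sign_ne_zero.mpr (mul_ne_zero hS hA))]

theorem statement9_general (f : MvPolynomial (Fin 3) ℝ) (hf : f.IsHomogeneous 4)
    (hsm : SmoothQuartic f)
    (ℓ ℓinf ℓM : Fin 3 → ℝ)
    (p₁ p₂ : Fin 3 → ℝ)
    (hdist : ¬ ∃ t : ℝ, p₂ = t • p₁)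
    (hbt : IsBitangentAt f (cvec ℓ) (cvec p₁) (cvec p₂))
    (hinf1 : lin ℓinf p₁ ≠ 0) (hinf2 : lin ℓinf p₂ ≠ 0)
    (hM1 : lin ℓM p₁ ≠ 0) (hM2 : lin ℓM p₂ ≠ 0) :
    (∃! ε : ℤ, HasQtype f ℓinf (cvec ℓ) ε) ∧
    (∃! ε : ℤ, HasQtype f ℓM (cvec ℓ) ε) ∧
    ∀ ε₁ ε₂ : ℤ, HasQtype f ℓinf (cvec ℓ) ε₁ → HasQtype f ℓM (cvec ℓ) ε₂ →
      (((ε₁ * ε₂ : ℤ) : ℝ) =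
          Real.sign (lin ℓinf p₁ * lin ℓinf p₂ * lin ℓM p₁ * lin ℓM p₂) ∧
       (ε₁ = ε₂ ↔ 0 < lin ℓinf p₁ * lin ℓinf p₂ * lin ℓM p₁ * lin ℓM p₂)) := by
  obtain ⟨r₁, hr₁, hg₁⟩ := hbt.exists_real_grad_eq_smul hsm
  obtain ⟨r₂, hr₂, hg₂⟩ := hbt.symm.exists_real_grad_eq_smul hsm
  have hinf := hasQtype_iff hf hbt hdist hr₁ hr₂ hg₁ hg₂ hinf1 hinf2
  have hM := hasQtype_iff hf hbt hdist hr₁ hr₂ hg₁ hg₂ hM1 hM2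
  refine ⟨⟨_, (hinf _).mpr rfl, fun ε => (hinf ε).mp⟩, ⟨_, (hM _).mpr rfl, fun ε => (hM ε).mp⟩,
    fun ε₁ ε₂ h₁ h₂ => ?_⟩
  rw [(hinf ε₁).mp h₁, (hM ε₂).mp h₂, mul_assoc _ (lin ℓM p₁)]
  exact sign_mul_sign_mul (mul_ne_zero hr₁ hr₂) (mul_ne_zero hinf1 hinf2)

/-- Let `L = V(ℓ)` be a split real bitangent of the smooth quartic
`V(f)` with distinct real tangency points represented by `p₁, p₂ ∈ ℝ³ ∖ {0}`, and let
`L∞ = V(ℓinf)`, `M = V(ℓM)` be real lines avoiding the tangency points.  Then the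
Qtypes of `L` relative to `L∞` and to `M` are defined, and
`Qtype_{L∞}(L)·Qtype_M(L) = sign(ℓ∞(p₁)·ℓ∞(p₂)·ℓ_M(p₁)·ℓ_M(p₂))`; equivalently the
two Qtypes agree iff `ℓ∞(p₁)·ℓ∞(p₂)·ℓ_M(p₁)·ℓ_M(p₂) > 0`, i.e. iff `L∞` does not
separate `p₁` from `p₂` in `ℙ²(ℝ) ∖ M` (does not meet the grate of `L` w.r.t. `M`). -/
theorem statement9 (f : MvPolynomial (Fin 3) ℝ) (hf : f.IsHomogeneous 4)
    (hsm : SmoothQuartic f)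
    (ℓ ℓinf ℓM : Fin 3 → ℝ) (hℓ : ℓ ≠ 0) (hinf : ℓinf ≠ 0) (hM : ℓM ≠ 0)
    (p₁ p₂ : Fin 3 → ℝ) (hp₁ : p₁ ≠ 0) (hp₂ : p₂ ≠ 0)
    (hdist : ¬ ∃ t : ℝ, p₂ = t • p₁)
    (hbt : IsBitangentAt f (cvec ℓ) (cvec p₁) (cvec p₂))
    (hinf1 : lin ℓinf p₁ ≠ 0) (hinf2 : lin ℓinf p₂ ≠ 0)
    (hM1 : lin ℓM p₁ ≠ 0) (hM2 : lin ℓM p₂ ≠ 0) :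
    (∃! ε : ℤ, HasQtype f ℓinf (cvec ℓ) ε) ∧
    (∃! ε : ℤ, HasQtype f ℓM (cvec ℓ) ε) ∧
    ∀ ε₁ ε₂ : ℤ, HasQtype f ℓinf (cvec ℓ) ε₁ → HasQtype f ℓM (cvec ℓ) ε₂ →
      (((ε₁ * ε₂ : ℤ) : ℝ) =
          Real.sign (lin ℓinf p₁ * lin ℓinf p₂ * lin ℓM p₁ * lin ℓM p₂) ∧
       (ε₁ = ε₂ ↔ 0 < lin ℓinf p₁ * lin ℓinf p₂ * lin ℓM p₁ * lin ℓM p₂)) :=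
  statement9_general f hf hsm ℓ ℓinf ℓM p₁ p₂ hdist hbt hinf1 hinf2 hM1 hM2

end
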